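/- Let L = L((ab)*) be the regular language of all words over {a,b} that are concatenations of zero or more copies of 'ab'. Given any directed graph G with vertices s and t, construct the undirected edge-labeled graph G′ with vertex set V(G) together with a new vertex m_{uv} for each directed edge (u,v) of G, where each directed edge (u,v) is replaced by an undirected edge {u, m_{uv}} labeled a and an undirected edge {m_{uv}, v} labeled b. Then there is a directed path from s to t in G if and only if there is a path from s to t in G′ whose yield belongs to L. -/

import Mathlib

inductive LabReaches {V α : Type*} (E : V → α → V → Prop) : V → List α → V → Prop
  | nil (v : V) : LabReaches E v [] v
  | cons {u v w : V} {a : α} {l : List α} :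
      E u a v → LabReaches E v l w → LabReaches E u (a :: l) w

/-- The language `(ab)*`, with `a` encoded as `false` and `b` as `true`. -/
def abStar : Set (List Bool) := {w | ∃ k : ℕ, w = (List.replicate k [false, true]).flatten}

/-- The directed "base" edges of the construction: for each directed edge `(u,v)` of `G`,
an edge `u → m_{uv}` labeled `a` (`false`) and an edge `m_{uv} → v` labeled `b` (`true`). -/
def baseEdges {V : Type*} (E : V → V → Prop) :
    (V ⊕ (V × V)) → Bool → (V ⊕ (V × V)) → Prop := fun x a y =>
  ∃ u v, E u v ∧
    ((x = Sum.inl u ∧ y = Sum.inr (u, v) ∧ a = false) ∨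
     (x = Sum.inr (u, v) ∧ y = Sum.inl v ∧ a = true))

/-- The undirected labeled graph `G'`: the symmetric closure of the base edges. -/
def primeEdges {V : Type*} (E : V → V → Prop) :
    (V ⊕ (V × V)) → Bool → (V ⊕ (V × V)) → Prop := fun x a y =>
  baseEdges E x a y ∨ baseEdges E y a x

theorem LabReaches.cons_iff {V α : Type*} {E : V → α → V → Prop} {u w : V} {a : α}
    {l : List α} : LabReaches E u (a :: l) w ↔ ∃ v, E u a v ∧ LabReaches E v l w := by
  constructor
  · rintro (_ | ⟨huv, hvw⟩)
    exact ⟨_, huv, hvw⟩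
  · rintro ⟨v, huv, hvw⟩
    exact .cons huv hvw

section

variable {V : Type*} {E : V → V → Prop}

theorem primeEdges_inl_false_iff {x : V} {m : V ⊕ (V × V)} :
    primeEdges E (.inl x) false m ↔ ∃ y, E x y ∧ m = .inr (x, y) := by
  simp only [primeEdges, baseEdges]
  aesop

theorem primeEdges_inr_true_iff {u v : V} {z : V ⊕ (V × V)} :
    primeEdges E (.inr (u, v)) true z ↔ E u v ∧ z = .inl v := by
  simp only [primeEdges, baseEdges]
  aesop

/-- No edge of `G` can be traversed backwards: the only `a`-edges at a vertex of `G` lead to its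
out-midpoints, and the only `b`-edge at `m_{xy}` leads to `y`. -/
theorem labReaches_primeEdges_ab_iff {x : V} {z : V ⊕ (V × V)} {l : List Bool} :
    LabReaches (primeEdges E) (.inl x) (false :: true :: l) z ↔
      ∃ y, E x y ∧ LabReaches (primeEdges E) (.inl y) l z := by
  simp only [LabReaches.cons_iff, primeEdges_inl_false_iff]
  constructor
  · rintro ⟨_, ⟨y, hxy, rfl⟩, _, hyz, hz⟩
    rw [primeEdges_inr_true_iff] at hyz
    obtain ⟨-, rfl⟩ := hyz
    exact ⟨y, hxy, hz⟩
  · rintro ⟨y, hxy, hz⟩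
    exact ⟨_, ⟨y, hxy, rfl⟩, _, primeEdges_inr_true_iff.2 ⟨hxy, rfl⟩, hz⟩

theorem reflTransGen_iff_exists_labReaches_primeEdges {x y : V} :
    Relation.ReflTransGen E x y ↔
      ∃ k, LabReaches (primeEdges E) (.inl x) (List.replicate k [false, true]).flatten (.inl y) := by
  constructor
  · intro h
    induction h using Relation.ReflTransGen.head_induction_on with
    | refl => exact ⟨0, .nil _⟩
    | head hxy _ ih =>
      obtain ⟨k, hk⟩ := ih
      exact ⟨k + 1, labReaches_primeEdges_ab_iff.2 ⟨_, hxy, hk⟩⟩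
  · rintro ⟨k, hk⟩
    induction k generalizing x with
    | zero => cases hk; rfl
    | succ k ih =>
      obtain ⟨z, hxz, hz⟩ := labReaches_primeEdges_ab_iff.1 hk
      exact .head hxz (ih hz)

end

/-- There is a directed path from `s` to `t` in `G` iff there is a path from `s` to `t`
in the undirected labeled graph `G'` whose yield is in `(ab)*`. -/
theorem stmt2 {V : Type*} (E : V → V → Prop) (s t : V) :
    Relation.ReflTransGen E s t ↔
      ∃ w ∈ abStar, LabReaches (primeEdges E) (Sum.inl s) w (Sum.inl t) := by
  rw [reflTransGen_iff_exists_labReaches_primeEdges]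
  constructor
  · rintro ⟨k, hk⟩
    exact ⟨_, ⟨k, rfl⟩, hk⟩
  · rintro ⟨_, ⟨k, rfl⟩, hk⟩
    exact ⟨k, hk⟩
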